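/- Let w be a weight structure on a triangulated category C and m ≤ n integers. An object O of C avoids weights m,…,n (i.e., id_O kills weights m,…,n) if and only if O is without weight i for every integer i with m ≤ i ≤ n. -/

import Mathlib

open CategoryTheory Limits Pretriangulated

structure WeightStructure (C : Type*) [Category C] [Preadditive C] [HasZeroObject C]
    [HasShift C ℤ] [∀ n : ℤ, (CategoryTheory.shiftFunctor C n).Additive] [Pretriangulated C] where
  le : Set C
  ge : Set C
  le_retract : ∀ ⦃X Y : C⦄, Y ∈ le → ∀ (i : X ⟶ Y) (r : Y ⟶ X), i ≫ r = 𝟙 X → X ∈ le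
  ge_retract : ∀ ⦃X Y : C⦄, Y ∈ ge → ∀ (i : X ⟶ Y) (r : Y ⟶ X), i ≫ r = 𝟙 X → X ∈ ge
  le_shift : ∀ ⦃X : C⦄, X ∈ le → X⟦(-1 : ℤ)⟧ ∈ le
  ge_shift : ∀ ⦃X : C⦄, X ∈ ge → X⟦(1 : ℤ)⟧ ∈ ge
  orth : ∀ ⦃X Y : C⦄, X ∈ le → Y ∈ ge → ∀ f : X ⟶ Y⟦(1 : ℤ)⟧, f = 0
  decomp : ∀ M : C, ∃ (L R : C) (f : L ⟶ M) (g : M ⟶ R) (δ : R ⟶ L⟦(1 : ℤ)⟧),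
    (Triangle.mk f g δ ∈ distTriang C) ∧ L ∈ le ∧ R⟦(-1 : ℤ)⟧ ∈ ge

namespace WeightStructure

variable {C : Type*} [Category C] [Preadditive C] [HasZeroObject C]
  [HasShift C ℤ] [∀ n : ℤ, (CategoryTheory.shiftFunctor C n).Additive] [Pretriangulated C]
  (w : WeightStructure C)

/-- The class `C_{w ≤ n} = C_{w≤0}[n]`. -/
def Le (n : ℤ) : Set C := {X | X⟦(-n)⟧ ∈ w.le}

/-- The class `C_{w ≥ n} = C_{w≥0}[n]`. -/
def Ge (n : ℤ) : Set C := {X | X⟦(-n)⟧ ∈ w.ge}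

/-- `f, g, δ` form a `k`-weight decomposition triangle of `M`. -/
def IsWeightDecomp (k : ℤ) {A M B : C} (f : A ⟶ M) (g : M ⟶ B) (δ : B ⟶ A⟦(1 : ℤ)⟧) : Prop :=
  (Triangle.mk f g δ ∈ distTriang C) ∧ A ∈ w.Le k ∧ B ∈ w.Ge (k + 1)

/-- `g : M ⟶ N` kills weights `m,…,n`. -/
def KillsWeights (m n : ℤ) {M N : C} (g : M ⟶ N) : Prop :=
  ∃ (A B A' B' : C) (a : A ⟶ M) (b : M ⟶ B) (δ : B ⟶ A⟦(1 : ℤ)⟧)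
    (a' : A' ⟶ N) (b' : N ⟶ B') (δ' : B' ⟶ A'⟦(1 : ℤ)⟧),
    w.IsWeightDecomp n a b δ ∧ w.IsWeightDecomp (m - 1) a' b' δ' ∧ a ≫ g ≫ b' = 0

/-- `M` is without weights `m,…,n`. -/
def WithoutWeights (m n : ℤ) (M : C) : Prop := w.KillsWeights m n (𝟙 M)

end WeightStructure


/-!
If `g : M ⟶ N` kills weights `m,…,n`, it kills them for *every* `n'`-weight decomposition of `M`
and `(m'-1)`-weight decomposition of `N` with `m ≤ m'`, `n' ≤ n`: by orthogonality,
`w_{≤n'}M → M` factors through the witnessing `w_{≤n}M`, and `N → w_{≥m'}N` through the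
witnessing `w_{≥m}N`. This restricts the range. Conversely, if `g` kills weights `k+1,…,n` and
`h : N ⟶ P` kills weights `m,…,k`, then `w_{≤n}M → M → N` vanishes on `w_{≥k+1}N`, so it factors
through `w_{≤k}N`, where `h` followed by `P → w_{≥m}P` vanishes; hence `g ≫ h` kills weights
`m,…,n`, and induction on `n` with `𝟙 O = 𝟙 O ≫ 𝟙 O` gives the converse.
-/

namespace CategoryTheory.Pretriangulated.Triangle

variable {C : Type*} [Category C] [Preadditive C] [HasZeroObject C]
  [HasShift C ℤ] [∀ n : ℤ, (CategoryTheory.shiftFunctor C n).Additive] [Pretriangulated C]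

/-- `Triangle.mk` is not reducible, so `simp` cannot see through `(Triangle.mk …).objᵢ`
in the types of identities; the `change`s restate the squares on the components. -/
lemma mk_comp_iso_distinguished {T : Triangle C} (hT : T ∈ distTriang C) {M : C} (e : T.obj₂ ≅ M) :
    Triangle.mk (T.mor₁ ≫ e.hom) (e.inv ≫ T.mor₂) T.mor₃ ∈ distTriang C :=
  isomorphic_distinguished _ hT _ (Triangle.isoMk _ _ (Iso.refl _) e.symm (Iso.refl _)
    (by change (T.mor₁ ≫ e.hom) ≫ e.inv = 𝟙 T.obj₁ ≫ T.mor₁; simp)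
    (by change (e.inv ≫ T.mor₂) ≫ 𝟙 T.obj₃ = e.inv ≫ T.mor₂; simp)
    (by change T.mor₃ ≫ (𝟙 T.obj₁)⟦(1 : ℤ)⟧' = 𝟙 T.obj₃ ≫ T.mor₃; simp))

end CategoryTheory.Pretriangulated.Triangle

namespace WeightStructure

variable {C : Type*} [Category C] [Preadditive C] [HasZeroObject C]
  [HasShift C ℤ] [∀ n : ℤ, (CategoryTheory.shiftFunctor C n).Additive] [Pretriangulated C]
  (w : WeightStructure C)

lemma mem_le_of_iso {X Y : C} (e : X ≅ Y) (h : Y ∈ w.le) : X ∈ w.le :=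
  w.le_retract h e.hom e.inv e.hom_inv_id

lemma mem_ge_of_iso {X Y : C} (e : X ≅ Y) (h : Y ∈ w.ge) : X ∈ w.ge :=
  w.ge_retract h e.hom e.inv e.hom_inv_id

lemma mem_Le_add_one {k : ℤ} {X : C} (h : X ∈ w.Le k) : X ∈ w.Le (k + 1) :=
  w.mem_le_of_iso ((shiftFunctorAdd' C (-k) (-1) (-(k + 1)) (by ring)).app X) (w.le_shift h)

lemma mem_Ge_of_mem_Ge_add_one {k : ℤ} {X : C} (h : X ∈ w.Ge (k + 1)) : X ∈ w.Ge k :=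
  w.mem_ge_of_iso ((shiftFunctorAdd' C (-(k + 1)) 1 (-k) (by ring)).app X) (w.ge_shift h)

lemma mem_Le_of_le {k k' : ℤ} (hk : k ≤ k') {X : C} (h : X ∈ w.Le k) : X ∈ w.Le k' := by
  induction k', hk using Int.leInduction with
  | base => exact h
  | succ j _ ih => exact w.mem_Le_add_one ih

lemma mem_Ge_of_le {k k' : ℤ} (hk : k ≤ k') {X : C} (h : X ∈ w.Ge k') : X ∈ w.Ge k := by
  induction k', hk using Int.leInduction with
  | base => exact h
  | succ j _ ih => exact ih (w.mem_Ge_of_mem_Ge_add_one h)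

lemma hom_eq_zero_of_mem_Le_of_mem_Ge {k : ℤ} {X Y : C} (hX : X ∈ w.Le k)
    (hY : Y ∈ w.Ge (k + 1)) (f : X ⟶ Y) : f = 0 := by
  let e := (shiftFunctorAdd' C (-(k + 1)) 1 (-k) (by ring)).app Y
  have h : (shiftFunctor C (-k)).map f ≫ e.hom = 0 := w.orth hX hY _
  rwa [← Functor.map_eq_zero_iff (shiftFunctor C (-k)), ← cancel_mono e.hom, zero_comp]

lemma exists_isWeightDecomp (k : ℤ) (M : C) :
    ∃ (A B : C) (a : A ⟶ M) (b : M ⟶ B) (δ : B ⟶ A⟦(1 : ℤ)⟧), w.IsWeightDecomp k a b δ := by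
  obtain ⟨L, R, f, g, δ, hT, hL, hR⟩ := w.decomp (M⟦-k⟧)
  have hT' := Triangle.mk_comp_iso_distinguished
    (T := (Triangle.shiftFunctor C k).obj (Triangle.mk f g δ)) (Triangle.shift_distinguished _ hT k)
    ((shiftFunctorCompIsoId C (-k) k (by ring)).app M)
  exact ⟨_, _, _, _, _, ⟨hT', w.mem_le_of_iso ((shiftFunctorCompIsoId C k (-k) (by ring)).app L) hL,
    w.mem_ge_of_iso ((shiftFunctorAdd' C k (-(k + 1)) (-1) (by ring)).app R).symm hR⟩⟩

variable {w}

lemma IsWeightDecomp.exists_lift {k : ℤ} {A M B : C} {a : A ⟶ M} {b : M ⟶ B}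
    {δ : B ⟶ A⟦(1 : ℤ)⟧} (h : w.IsWeightDecomp k a b δ) {X : C} (hX : X ∈ w.Le k)
    (f : X ⟶ M) : ∃ c : X ⟶ A, f = c ≫ a :=
  Triangle.coyoneda_exact₂ _ h.1 f (w.hom_eq_zero_of_mem_Le_of_mem_Ge hX h.2.2 _)

lemma IsWeightDecomp.exists_desc {k : ℤ} {A M B : C} {a : A ⟶ M} {b : M ⟶ B}
    {δ : B ⟶ A⟦(1 : ℤ)⟧} (h : w.IsWeightDecomp k a b δ) {Y : C} (hY : Y ∈ w.Ge (k + 1))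
    (g : M ⟶ Y) : ∃ d : B ⟶ Y, g = b ≫ d :=
  Triangle.yoneda_exact₂ _ h.1 g (w.hom_eq_zero_of_mem_Le_of_mem_Ge h.2.1 hY _)

lemma KillsWeights.comp_eq_zero {m n i j : ℤ} {M N : C} {g : M ⟶ N}
    (hg : w.KillsWeights m n g) {A₁ B₁ A₂ B₂ : C} {a₁ : A₁ ⟶ M} {b₁ : M ⟶ B₁}
    {δ₁ : B₁ ⟶ A₁⟦(1 : ℤ)⟧} (h₁ : w.IsWeightDecomp i a₁ b₁ δ₁) (hi : i ≤ n)
    {a₂ : A₂ ⟶ N} {b₂ : N ⟶ B₂} {δ₂ : B₂ ⟶ A₂⟦(1 : ℤ)⟧}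
    (h₂ : w.IsWeightDecomp j a₂ b₂ δ₂) (hj : m ≤ j + 1) :
    a₁ ≫ g ≫ b₂ = 0 := by
  obtain ⟨A, B, A', B', a, b, δ, a', b', δ', hM, hN, hzero⟩ := hg
  obtain ⟨c, rfl⟩ := hM.exists_lift (w.mem_Le_of_le hi h₁.2.1) a₁
  obtain ⟨d, rfl⟩ := hN.exists_desc (w.mem_Ge_of_le (by omega) h₂.2.2) b₂
  simp only [Category.assoc, reassoc_of% hzero, zero_comp, comp_zero]

lemma KillsWeights.mono {m n m' n' : ℤ} (hm : m ≤ m') (hn : n' ≤ n) {M N : C} {g : M ⟶ N}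
    (hg : w.KillsWeights m n g) : w.KillsWeights m' n' g := by
  obtain ⟨A₁, B₁, a₁, b₁, δ₁, h₁⟩ := w.exists_isWeightDecomp n' M
  obtain ⟨A₂, B₂, a₂, b₂, δ₂, h₂⟩ := w.exists_isWeightDecomp (m' - 1) N
  exact ⟨A₁, B₁, A₂, B₂, a₁, b₁, δ₁, a₂, b₂, δ₂, h₁, h₂, hg.comp_eq_zero h₁ hn h₂ (by omega)⟩

lemma KillsWeights.comp {m k n : ℤ} {M N P : C} {g : M ⟶ N} {h : N ⟶ P}
    (hg : w.KillsWeights (k + 1) n g) (hh : w.KillsWeights m k h) :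
    w.KillsWeights m n (g ≫ h) := by
  obtain ⟨A₁, B₁, a₁, b₁, δ₁, h₁⟩ := w.exists_isWeightDecomp n M
  obtain ⟨A₂, B₂, a₂, b₂, δ₂, h₂⟩ := w.exists_isWeightDecomp k N
  obtain ⟨A₃, B₃, a₃, b₃, δ₃, h₃⟩ := w.exists_isWeightDecomp (m - 1) P
  obtain ⟨c, hc⟩ : ∃ c : A₁ ⟶ A₂, a₁ ≫ g = c ≫ a₂ := Triangle.coyoneda_exact₂ _ h₂.1 (a₁ ≫ g)
    ((Category.assoc _ _ _).trans (hg.comp_eq_zero h₁ le_rfl h₂ le_rfl))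
  refine ⟨A₁, B₁, A₃, B₃, a₁, b₁, δ₁, a₃, b₃, δ₃, h₁, h₃, ?_⟩
  have hzero : a₂ ≫ h ≫ b₃ = 0 := hh.comp_eq_zero h₂ le_rfl h₃ (by omega)
  rw [Category.assoc, reassoc_of% hc, hzero, comp_zero]

end WeightStructure

/-- an object avoids weights `m,…,n` iff it is without weight `i`
for every `m ≤ i ≤ n`. -/
theorem withoutWeights_iff_forall {C : Type*} [Category C] [Preadditive C] [HasZeroObject C]
    [HasShift C ℤ] [∀ n : ℤ, (CategoryTheory.shiftFunctor C n).Additive] [Pretriangulated C]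
    (w : WeightStructure C) (m n : ℤ) (hmn : m ≤ n) (O : C) :
    w.WithoutWeights m n O ↔ ∀ i : ℤ, m ≤ i → i ≤ n → w.WithoutWeights i i O := by
  refine ⟨fun h i hmi hin => WeightStructure.KillsWeights.mono hmi hin h, fun h => ?_⟩
  induction n, hmn using Int.leInduction with
  | base => exact h m le_rfl le_rfl
  | succ j hmj ih =>
    have hj : w.WithoutWeights m j O := ih fun i hmi hij => h i hmi (by omega)
    have hcomp := (h (j + 1) (by omega) le_rfl).comp hj
    rwa [Category.comp_id] at hcomp
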